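/- Corollary: Let f be a BN and x̂ → ŷ an MP step with Δ(x̂,ŷ) = {i} and x̂_i Boolean (so ŷ_i is transient). Then there is a transition t ∈ T_i such that the 0.5-firing of t from ⟨x̂⟩ leads exactly to ⟨ŷ⟩. -/

import Mathlib

open Relation Filter

/-! ### Boolean networks and their semantics -/

abbrev Config (n : ℕ) := Fin n → Bool
abbrev BN (n : ℕ) := Config n → Fin n → Bool

def Delta {n : ℕ} (x y : Config n) : Set (Fin n) := {i | x i ≠ y i}

def fa {n : ℕ} (f : BN n) (x y : Config n) : Prop :=
  ∃ i, Delta x y = {i} ∧ f x i = y i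

def syn {n : ℕ} (f : BN n) (x y : Config n) : Prop := ∀ i, f x i = y i

def ga {n : ℕ} (f : BN n) (x y : Config n) : Prop := ∀ i ∈ Delta x y, f x i = y i

/-! ### Most permissive semantics -/

inductive MPV where
  | b : Bool → MPV
  | up : MPV
  | down : MPV
deriving DecidableEq

abbrev MPConfig (n : ℕ) := Fin n → MPV

def toMP {n : ℕ} (x : Config n) : MPConfig n := fun i => .b (x i)

def beta {n : ℕ} (xh : MPConfig n) : Set (Config n) :=
  {x | ∀ i v, xh i = .b v → x i = v}

def mpStep {n : ℕ} (f : BN n) (xh yh : MPConfig n) : Prop :=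
  ∃ i, (∀ j, j ≠ i → xh j = yh j) ∧ xh i ≠ yh i ∧
    ((xh i = .up ∧ yh i = .b true) ∨
     (xh i = .down ∧ yh i = .b false) ∨
     (xh i ≠ .b true ∧ yh i = .up ∧ ∃ x ∈ beta xh, f x i = true) ∨
     (xh i ≠ .b false ∧ yh i = .down ∧ ∃ x ∈ beta xh, f x i = false))

def mp {n : ℕ} (f : BN n) (x y : Config n) : Prop :=
  ReflTransGen (mpStep f) (toMP x) (toMP y)

/-! ### Petri nets (discrete and continuous) -/

structure Net (P T : Type) where
  wPT : P → T → ℕ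
  wTP : T → P → ℕ

def dfire {P T : Type} (N : Net P T) (t : T) (M M' : P → ℕ) : Prop :=
  (∀ p, N.wPT p t ≤ M p) ∧ ∀ p, M' p = M p - N.wPT p t + N.wTP t p

def dReach {P T : Type} (N : Net P T) : (P → ℕ) → (P → ℕ) → Prop :=
  ReflTransGen (fun M M' => ∃ t, dfire N t M M')

def cfire {P T : Type} (N : Net P T) (t : T) (α : ℝ) (m m' : P → ℝ) : Prop :=
  0 ≤ α ∧ (∀ p, α * N.wPT p t ≤ m p) ∧
    ∀ p, m' p = m p - α * N.wPT p t + α * N.wTP t p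

def cReach {P T : Type} (N : Net P T) : (P → ℝ) → (P → ℝ) → Prop :=
  ReflTransGen (fun m m' => ∃ t α, cfire N t α m m')

def limReach {P T : Type} (N : Net P T) (m m' : P → ℝ) : Prop :=
  ∃ ms : ℕ → P → ℝ, ms 0 = m ∧
    (∀ k, ∃ t α, cfire N t α (ms k) (ms (k+1))) ∧
    Tendsto ms atTop (nhds m')

def IsTrap {P T : Type} (N : Net P T) (S : Set P) : Prop :=
  ∀ t, (∃ p ∈ S, 0 < N.wPT p t) → ∃ p ∈ S, 0 < N.wTP t p

def enabPos {P T : Type} (N : Net P T) (t : T) (m : P → ℝ) : Prop :=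
  ∀ p, 0 < N.wPT p t → 0 < m p

def enabGe {P T : Type} (N : Net P T) (t : T) (m : P → ℝ) (c : ℝ) : Prop :=
  ∀ p, 0 < N.wPT p t → c * N.wPT p t ≤ m p

/-! ### Petri net encoding of Boolean networks -/

abbrev Clause (n : ℕ) := Fin n → Option Bool

def satC {n : ℕ} (z : Config n) (C : Clause n) : Prop :=
  ∀ j v, C j = some v → z j = v

structure ETrans (n : ℕ) where
  i : Fin n
  s : Bool
  C : Clause n

abbrev EPlace (n : ℕ) := Fin n × Bool

def encNet (n : ℕ) : Net (EPlace n) (ETrans n) where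
  wPT := fun p t =>
    if p.1 = t.i then (if p.2 = !t.s then 1 else 0)
    else (if t.C p.1 = some p.2 then 1 else 0)
  wTP := fun t p =>
    if p.1 = t.i then (if p.2 = t.s then 1 else 0)
    else (if t.C p.1 = some p.2 then 1 else 0)

def mu {n : ℕ} (xh : MPConfig n) : Set (EPlace n → ℝ) :=
  {m | (∀ p, 0 ≤ m p) ∧ ∀ i,
    m (i, false) + m (i, true) = 1 ∧
    (∀ v, xh i = .b v → m (i, v) = 1) ∧
    ((xh i = .up ∨ xh i = .down) →
      0 < m (i, false) ∧ m (i, false) < 1 ∧ 0 < m (i, true) ∧ m (i, true) < 1)}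

noncomputable def canon {n : ℕ} (xh : MPConfig n) : EPlace n → ℝ := fun p =>
  match xh p.1 with
  | .b v => if p.2 = v then 1 else 0
  | _ => 1/2

def validT {n : ℕ} (D : Fin n → Bool → Set (Clause n)) (t : ETrans n) : Prop :=
  t.C ∈ D t.i t.s

def IsDNF {n : ℕ} (f : BN n) (D : Fin n → Bool → Set (Clause n)) : Prop :=
  (∀ i s z, (∃ C ∈ D i s, satC z C) ↔ (z i = !s ∧ f z i = s)) ∧
  (∀ i s C, C ∈ D i s → C i = some (!s))

def cReachG {P T : Type} (N : Net P T) (good : T → Prop) :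
    (P → ℝ) → (P → ℝ) → Prop :=
  ReflTransGen (fun m m' => ∃ t, good t ∧ ∃ α, cfire N t α m m')

def climReachG {P T : Type} (N : Net P T) (good : T → Prop) (m m' : P → ℝ) : Prop :=
  ∃ ms : ℕ → P → ℝ, ms 0 = m ∧
    (∀ k, ∃ t, good t ∧ ∃ α, cfire N t α (ms k) (ms (k+1))) ∧
    Tendsto ms atTop (nhds m')

/-!
A Boolean-to-transient MP step at `i` with `x̂ᵢ = v` is witnessed by a configuration `x ∈ β(x̂)`
with `f(x)ᵢ = ¬v`; by the DNF property `x` satisfies a clause `C` of `D i (¬v)`, which gives the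
transition `t = ⟨i, ¬v, C⟩ ∈ Tᵢ`. Every input place of `t` agrees with `x`, so carries at least
`1/2` in `⟨x̂⟩`, and `t` is half-enabled. Firing it with weight `1/2` moves half a token from
`(i, v)` to `(i, ¬v)` and leaves all other places unchanged, since those are read by loops.
-/

lemma cfire_of_enabGe {P T : Type} {N : Net P T} {t : T} {α : ℝ} {m m' : P → ℝ}
    (hα : 0 ≤ α) (hm : ∀ p, 0 ≤ m p) (hen : enabGe N t m α)
    (hm' : ∀ p, m' p = m p - α * N.wPT p t + α * N.wTP t p) :
    cfire N t α m m' := by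
  refine ⟨hα, fun p => ?_, hm'⟩
  rcases (N.wPT p t).eq_zero_or_pos with h | h
  · simpa [h] using hm p
  · exact hen p h

section canon

variable {n : ℕ}

lemma canon_nonneg (xh : MPConfig n) (p : EPlace n) : 0 ≤ canon xh p := by
  unfold canon
  split <;> positivity

lemma canon_of_b {xh : MPConfig n} {j : Fin n} {v : Bool} (h : xh j = .b v) (b : Bool) :
    canon xh (j, b) = if b = v then 1 else 0 := by
  simp [canon, h]

lemma canon_of_transient {xh : MPConfig n} {j : Fin n} (h : xh j = .up ∨ xh j = .down)
    (b : Bool) : canon xh (j, b) = 1 / 2 := by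
  rcases h with h | h <;> simp [canon, h]

lemma half_le_canon_of_mem_beta {xh : MPConfig n} {x : Config n} (hx : x ∈ beta xh)
    (j : Fin n) : 1 / 2 ≤ canon xh (j, x j) := by
  rcases h : xh j with w | _ | _
  · rw [canon_of_b h, if_pos (hx j w h)]
    norm_num
  all_goals simp [canon, h]

end canon

section encNet

variable {n : ℕ}

lemma encNet_wPT_le_one (p : EPlace n) (t : ETrans n) : (encNet n).wPT p t ≤ 1 := by
  simp only [encNet]
  split_ifs <;> omega

lemma encNet_wPT_eq_wTP_of_ne {j : Fin n} {t : ETrans n} (hj : j ≠ t.i) (b : Bool) :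
    (encNet n).wPT (j, b) t = (encNet n).wTP t (j, b) := by
  simp [encNet, hj]

lemma eq_of_encNet_wPT_pos {i : Fin n} {s : Bool} {C : Clause n} {x : Config n}
    (hxi : x i = !s) (hsat : satC x C) {j : Fin n} {b : Bool}
    (h : 0 < (encNet n).wPT (j, b) ⟨i, s, C⟩) : x j = b := by
  by_cases hj : j = i
  · subst hj
    simp only [encNet, if_true] at h
    split_ifs at h with hb
    · exact hxi.trans hb.symm
    · omega
  · simp only [encNet, if_neg hj] at h
    split_ifs at h with hC
    · exact hsat j b hC
    · omega

lemma enabGe_half_canon {xh : MPConfig n} {x : Config n} (hx : x ∈ beta xh) {i : Fin n}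
    {s : Bool} {C : Clause n} (hxi : x i = !s) (hsat : satC x C) :
    enabGe (encNet n) ⟨i, s, C⟩ (canon xh) (1 / 2) := by
  rintro ⟨j, b⟩ h
  have hle : ((encNet n).wPT (j, b) ⟨i, s, C⟩ : ℝ) ≤ 1 := by exact_mod_cast encNet_wPT_le_one _ _
  have := half_le_canon_of_mem_beta hx j
  rw [eq_of_encNet_wPT_pos hxi hsat h] at this
  linarith

end encNet

lemma canon_half_fire_eq {n : ℕ} {xh yh : MPConfig n} {i : Fin n} {v : Bool}
    (hxi : xh i = .b v) (hyi : yh i = .up ∨ yh i = .down)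
    (hframe : ∀ j, j ≠ i → xh j = yh j) (C : Clause n) (p : EPlace n) :
    canon yh p = canon xh p - 1 / 2 * (encNet n).wPT p ⟨i, !v, C⟩
      + 1 / 2 * (encNet n).wTP ⟨i, !v, C⟩ p := by
  obtain ⟨j, b⟩ := p
  by_cases hj : j = i
  · subst hj
    rw [canon_of_b hxi, canon_of_transient hyi]
    cases b <;> cases v <;> simp [encNet] <;> norm_num
  · rw [encNet_wPT_eq_wTP_of_ne hj]
    simp [canon, hframe j hj]

lemma mpStep.of_boolean_ne {n : ℕ} {f : BN n} {xh yh : MPConfig n} {i : Fin n} {v : Bool}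
    (h : mpStep f xh yh) (hne : xh i ≠ yh i) (hv : xh i = .b v) :
    (∀ j, j ≠ i → xh j = yh j) ∧ (yh i = .up ∨ yh i = .down) ∧
      ∃ x ∈ beta xh, f x i = !v := by
  obtain ⟨k, hframe, -, hcase⟩ := h
  obtain rfl : k = i := by
    by_contra hk
    exact hne (hframe i (Ne.symm hk))
  refine ⟨hframe, ?_⟩
  rcases hcase with ⟨h, -⟩ | ⟨h, -⟩ | ⟨hnt, hup, x, hx, hfx⟩ | ⟨hnf, hdn, x, hx, hfx⟩
  · simp [hv] at h
  · simp [hv] at h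
  · obtain rfl : v = false := by simpa [hv] using hnt
    exact ⟨Or.inl hup, x, hx, hfx⟩
  · obtain rfl : v = true := by simpa [hv] using hnf
    exact ⟨Or.inr hdn, x, hx, hfx⟩

theorem boolean_to_transient_half_firing_general {n : ℕ} (f : BN n)
    (D : Fin n → Bool → Set (Clause n)) (hD : IsDNF f D)
    (xh yh : MPConfig n) (i : Fin n)
    (hstep : mpStep f xh yh)
    (hne : xh i ≠ yh i)
    (hbool : ∃ v, xh i = MPV.b v) :
    ∃ t : ETrans n, t.i = i ∧ validT D t ∧
      cfire (encNet n) t (1/2) (canon xh) (canon yh) := by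
  obtain ⟨v, hv⟩ := hbool
  obtain ⟨hframe, hyi, x, hx, hfx⟩ := hstep.of_boolean_ne hne hv
  have hxi : x i = !!v := by simpa using hx i v hv
  obtain ⟨C, hC, hsat⟩ := (hD.1 i (!v) x).2 ⟨hxi, hfx⟩
  exact ⟨⟨i, !v, C⟩, rfl, hC, cfire_of_enabGe (by norm_num) (canon_nonneg xh)
    (enabGe_half_canon hx hxi hsat) (canon_half_fire_eq hv hyi hframe C)⟩

/-- corollary: for an MP step changing exactly variable i
from a Boolean value to a transient value, some transition t ∈ T_i of the
encoding 0.5-fires from ⟨x̂⟩ exactly to ⟨ŷ⟩. -/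
theorem boolean_to_transient_half_firing {n : ℕ} (f : BN n)
    (D : Fin n → Bool → Set (Clause n)) (hD : IsDNF f D)
    (xh yh : MPConfig n) (i : Fin n)
    (hstep : mpStep f xh yh)
    (hdiff : ∀ j, j ≠ i → xh j = yh j) (hne : xh i ≠ yh i)
    (hbool : ∃ v, xh i = MPV.b v) :
    ∃ t : ETrans n, t.i = i ∧ validT D t ∧
      cfire (encNet n) t (1/2) (canon xh) (canon yh) :=
  boolean_to_transient_half_firing_general f D hD xh yh i hstep hne hbool
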